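/- arXiv:1902.04962 — 7 statements merged into one kernel-verified Lean document; each statement's English description precedes it below -/
import Mathlib

section
/- Let p ≥ 1, let λ_0, ..., λ_p be distinct complex numbers, and let d_0, ..., d_p be nonzero complex numbers. Define ψ(j) = -∑_{k=0}^p d_k e^{λ_k j} for j ∈ ℕ. Then the (p+1)×(p+1) Hankel matrix Ψ with entries Ψ_{j,l} = ψ(j+l) for j, l ∈ {0, ..., p} is invertible. -/
open Complex Finset Matrix

/-- Invertibility of the Hankel matrix built from `ψ(j) = -∑_k d_k e^{λ_k j}`,
assuming the exponentials `e^{λ_k}` are pairwise distinct and all `d_k ≠ 0`. -/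
theorem hankel_invertible (p : ℕ) (hp : 1 ≤ p)
    (lam : Fin (p + 1) → ℂ) (d : Fin (p + 1) → ℂ)
    (hlam : Function.Injective fun k => Complex.exp (lam k))
    (hd : ∀ k, d k ≠ 0)
    (ψ : ℕ → ℂ)
    (hψ : ∀ j : ℕ, ψ j = -∑ k : Fin (p + 1), d k * Complex.exp (lam k * j)) :
    IsUnit (Matrix.of fun j l : Fin (p + 1) => ψ ((j : ℕ) + (l : ℕ))) := by
  set x : Fin (p + 1) → ℂ := fun k => Complex.exp (lam k) with hx
  have hfact : (Matrix.of fun j l : Fin (p + 1) => ψ ((j : ℕ) + (l : ℕ)))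
      = -((Matrix.vandermonde x)ᵀ * Matrix.diagonal d * Matrix.vandermonde x) := by
    ext j l
    simp only [Matrix.of_apply, Matrix.neg_apply, Matrix.mul_apply, Matrix.diagonal_apply,
      Matrix.transpose_apply, Matrix.vandermonde_apply, hψ]
    rw [neg_inj]
    apply Finset.sum_congr rfl
    intro k _
    rw [Finset.sum_eq_single k (fun b _ hb => by simp [hb]) (fun h => absurd (Finset.mem_univ k) h)]
    have : Complex.exp (lam k * (((j : ℕ) + (l : ℕ) : ℕ) : ℂ)) = x k ^ ((j : ℕ) + (l : ℕ)) := by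
      rw [mul_comm, Complex.exp_nat_mul]
    rw [this, pow_add]
    simp
    ring
  rw [hfact]
  rw [Matrix.isUnit_iff_isUnit_det, Matrix.det_neg, Matrix.det_mul, Matrix.det_mul,
    Matrix.det_transpose, Matrix.det_diagonal]
  refine (isUnit_iff_ne_zero.2 ?_)
  have hvd : (Matrix.vandermonde x).det ≠ 0 := by
    rw [Matrix.det_vandermonde_ne_zero_iff]
    exact hlam
  have hdprod : ∏ k, d k ≠ 0 := Finset.prod_ne_zero_iff.2 fun k _ => hd k
  apply mul_ne_zero
  · exact pow_ne_zero _ (by norm_num)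
  · exact mul_ne_zero (mul_ne_zero hvd hdprod) hvd
end

section
/- Let λ < 0 and Δ > 0, M ∈ ℕ. Then ∫_0^∞ (e^{λs} - ∑_{j=0}^M e^{λ j Δ} 1_{[jΔ,(j+1)Δ]}(s))² ds = 1/(-2λ) + ((e^{2λ(M+1)Δ} - 1)Δ/(e^{2λΔ} - 1)) · (1 - 2(e^{λΔ} - 1)/(λΔ)), and this quantity tends to 0 as simultaneously Δ → 0 and ΔM → ∞. -/
open MeasureTheory Filter Finset

open Real Topology intervalIntegral

/-!
On the cell `(jΔ, (j+1)Δ)` the error is `(e^{λs} - e^{λjΔ})² = e^{2λjΔ} (e^{λ(s-jΔ)} - 1)²`,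
so the cell contributes `q^j C` with `q = e^{2λΔ}` and `C = ∫₀^Δ (e^{λu} - 1)² du`; beyond
`(M+1)Δ` the step function vanishes and the error is `e^{2λs}`. A geometric sum plus the tail
integral gives the closed form. In it, `e^{2λ(M+1)Δ} → 0`, while `(eˣ - 1)/x → 1` gives
`Δ/(e^{2λΔ} - 1) → 1/(2λ)` and `(e^{λΔ} - 1)/(λΔ) → 1`, so the closed form tends to
`1/(-2λ) + 1/(2λ) = 0`.
-/

noncomputable def stepFunction (Δ : ℝ) (M : ℕ) (c : ℕ → ℝ) (s : ℝ) : ℝ :=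
  ∑ j ∈ range (M + 1),
    Set.indicator (Set.Icc ((j : ℝ) * Δ) (((j : ℝ) + 1) * Δ)) (fun _ => c j) s

section StepFunction

variable {Δ s : ℝ} {M j : ℕ} {c : ℕ → ℝ}

theorem stepFunction_eq_of_mem_Ioo (hΔ : 0 < Δ) (hj : j ≤ M)
    (hs : s ∈ Set.Ioo ((j : ℝ) * Δ) ((j + 1) * Δ)) : stepFunction Δ M c s = c j := by
  rw [stepFunction, sum_eq_single_of_mem j (mem_range.2 (Nat.lt_succ_of_le hj)),
    Set.indicator_of_mem (Set.Ioo_subset_Icc_self hs)]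
  intro k _ hkj
  refine Set.indicator_of_notMem (fun hk => ?_) _
  rcases hkj.lt_or_gt with h | h
  · have : ((k : ℝ) + 1) * Δ ≤ j * Δ := by gcongr; exact_mod_cast h
    linarith [hk.2, hs.1]
  · have : ((j : ℝ) + 1) * Δ ≤ k * Δ := by gcongr; exact_mod_cast h
    linarith [hk.1, hs.2]

theorem stepFunction_eq_zero_of_lt (hΔ : 0 ≤ Δ) (hs : ((M : ℝ) + 1) * Δ < s) :
    stepFunction Δ M c s = 0 := by
  refine sum_eq_zero fun k hk => Set.indicator_of_notMem (fun hks => ?_) _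
  have : ((k : ℝ) + 1) * Δ ≤ (M + 1) * Δ := by
    gcongr; exact_mod_cast Nat.lt_succ_iff.1 (mem_range.1 hk)
  linarith [hks.2]

end StepFunction

theorem integral_exp_mul_sub_one_sq {c : ℝ} (hc : c ≠ 0) (t : ℝ) :
    ∫ u in (0 : ℝ)..t, (exp (c * u) - 1) ^ 2
      = (exp (2 * c * t) - 1) / (2 * c) - 2 * (exp (c * t) - 1) / c + t := by
  have hderiv (u : ℝ) :
      HasDerivAt (fun u => exp (2 * c * u) / (2 * c) - 2 * exp (c * u) / c + u)
        ((exp (c * u) - 1) ^ 2) u := by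
    have h := ((((hasDerivAt_id u).const_mul (2 * c)).exp.div_const (2 * c)).sub
      (((hasDerivAt_id u).const_mul c).exp.const_mul 2 |>.div_const c)).add (hasDerivAt_id u)
    refine h.congr_deriv ?_
    have : exp (2 * c * u) = exp (c * u) ^ 2 := by rw [sq, ← exp_add]; ring_nf
    simp only [id, this]
    field_simp
    ring
  rw [integral_eq_sub_of_hasDerivAt (fun u _ => hderiv u)
    (Continuous.intervalIntegrable (by fun_prop) _ _)]
  simp only [mul_zero, exp_zero]
  ring

theorem integral_exp_mul_sub_exp_sq (c a t : ℝ) :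
    ∫ x in a..a + t, (exp (c * x) - exp (c * a)) ^ 2
      = exp (c * a) ^ 2 * ∫ u in (0 : ℝ)..t, (exp (c * u) - 1) ^ 2 := by
  have hshift (x : ℝ) : (exp (c * x) - exp (c * a)) ^ 2
      = exp (c * a) ^ 2 * (exp (c * (x - a)) - 1) ^ 2 := by
    rw [show c * x = c * (x - a) + c * a by ring, exp_add]
    ring
  simp_rw [hshift, intervalIntegral.integral_const_mul,
    integral_comp_sub_right (fun u => (exp (c * u) - 1) ^ 2)]
  simp

theorem exp_mul_nat_mul_sq (c Δ : ℝ) (j : ℕ) : exp (c * (j * Δ)) ^ 2 = exp (2 * c * Δ) ^ j := by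
  rw [← exp_nat_mul, ← exp_nat_mul]
  push_cast
  ring_nf

noncomputable def stepError (lam Δ : ℝ) (M : ℕ) (s : ℝ) : ℝ :=
  (exp (lam * s) - stepFunction Δ M (fun j => exp (lam * j * Δ)) s) ^ 2

noncomputable def stepErrorClosedForm (lam Δ : ℝ) (M : ℕ) : ℝ :=
  1 / (-(2 * lam))
    + (exp (2 * lam * ((M : ℝ) + 1) * Δ) - 1) * Δ / (exp (2 * lam * Δ) - 1)
      * (1 - 2 * (exp (lam * Δ) - 1) / (lam * Δ))

section StepError

variable {lam Δ : ℝ} {M j : ℕ}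

theorem stepError_eqOn_cell (hΔ : 0 < Δ) (hj : j < M + 1) :
    Set.EqOn (fun x => (exp (lam * x) - exp (lam * (j * Δ))) ^ 2) (stepError lam Δ M)
      (Set.uIoo ((j : ℝ) * Δ) ((j + 1 : ℕ) * Δ)) := by
  intro x hx
  rw [Set.uIoo_of_le (by gcongr; simp), Nat.cast_succ] at hx
  simp only [stepError, stepFunction_eq_of_mem_Ioo hΔ (Nat.lt_succ_iff.1 hj) hx, mul_assoc]

theorem intervalIntegrable_stepError_cell (hΔ : 0 < Δ) (hj : j < M + 1) :
    IntervalIntegrable (stepError lam Δ M) volume (j * Δ) ((j + 1 : ℕ) * Δ) :=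
  (Continuous.intervalIntegrable (by fun_prop) _ _).congr_uIoo (stepError_eqOn_cell hΔ hj)

theorem integral_stepError_cell (hΔ : 0 < Δ) (hj : j < M + 1) :
    ∫ x in j * Δ..(j + 1 : ℕ) * Δ, stepError lam Δ M x
      = exp (2 * lam * Δ) ^ j * ∫ u in (0 : ℝ)..Δ, (exp (lam * u) - 1) ^ 2 := by
  rw [← integral_congr_uIoo (stepError_eqOn_cell hΔ hj), Nat.cast_succ, add_one_mul,
    integral_exp_mul_sub_exp_sq, exp_mul_nat_mul_sq]

theorem intervalIntegrable_stepError (hΔ : 0 < Δ) :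
    IntervalIntegrable (stepError lam Δ M) volume 0 (((M : ℝ) + 1) * Δ) := by
  simpa using IntervalIntegrable.trans_iterate (a := fun k : ℕ => (k : ℝ) * Δ)
    fun k hk => intervalIntegrable_stepError_cell (M := M) hΔ hk

theorem intervalIntegral_stepError (hΔ : 0 < Δ) :
    ∫ x in (0 : ℝ)..((M : ℝ) + 1) * Δ, stepError lam Δ M x
      = ∑ j ∈ range (M + 1),
          exp (2 * lam * Δ) ^ j * ∫ u in (0 : ℝ)..Δ, (exp (lam * u) - 1) ^ 2 := by
  have h := sum_integral_adjacent_intervals (a := fun k : ℕ => (k : ℝ) * Δ)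
    fun k hk => intervalIntegrable_stepError_cell (lam := lam) (M := M) hΔ hk
  simp only [Nat.cast_zero, zero_mul] at h
  rw [← Nat.cast_add_one, ← h]
  exact sum_congr rfl fun j hj => integral_stepError_cell hΔ (mem_range.1 hj)

theorem stepError_eqOn_Ioi (hΔ : 0 ≤ Δ) :
    Set.EqOn (stepError lam Δ M) (fun x => exp (2 * lam * x)) (Set.Ioi (((M : ℝ) + 1) * Δ)) := by
  intro x hx
  simp only [stepError, stepFunction_eq_zero_of_lt hΔ hx, sub_zero, sq, ← exp_add]
  ring_nf

theorem integral_Ioi_stepError (hlam : lam < 0) (hΔ : 0 < Δ) :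
    ∫ s in Set.Ioi 0, stepError lam Δ M s = stepErrorClosedForm lam Δ M := by
  set T := ((M : ℝ) + 1) * Δ with hT
  set q := exp (2 * lam * Δ) with hq
  have htailInt : IntegrableOn (stepError lam Δ M) (Set.Ioi T) :=
    (integrableOn_exp_mul_Ioi (by linarith) T).congr_fun (stepError_eqOn_Ioi hΔ.le).symm
      measurableSet_Ioi
  have hq1 : q ≠ 1 := (exp_lt_one_iff.2 (by nlinarith)).ne
  have hqT : exp (2 * lam * T) = q ^ (M + 1) := by
    rw [← exp_nat_mul, hT]
    push_cast
    ring_nf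
  rw [← integral_interval_add_Ioi' (intervalIntegrable_stepError hΔ) htailInt,
    intervalIntegral_stepError hΔ,
    setIntegral_congr_fun measurableSet_Ioi (stepError_eqOn_Ioi hΔ.le),
    integral_exp_mul_Ioi (by linarith), ← sum_mul, geom_sum_eq hq1,
    integral_exp_mul_sub_one_sq hlam.ne, stepErrorClosedForm,
    show 2 * lam * ((M : ℝ) + 1) * Δ = 2 * lam * T by ring, hqT, ← hq]
  have : q - 1 ≠ 0 := sub_ne_zero.2 hq1
  have := hlam.ne
  have := hΔ.ne'
  field_simp
  ring

end StepError

theorem tendsto_exp_sub_one_div : Tendsto (fun u => (exp u - 1) / u) (𝓝[≠] 0) (𝓝 1) := by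
  have h := hasDerivAt_iff_tendsto_slope.1 (hasDerivAt_exp 0)
  rw [exp_zero] at h
  refine h.congr fun u => ?_
  simp [slope_def_field]

theorem tendsto_exp_mul_sub_one_div {ι : Type*} {l : Filter ι} {Δ : ι → ℝ} {c : ℝ} (hc : c ≠ 0)
    (hΔ : Tendsto Δ l (𝓝[≠] 0)) :
    Tendsto (fun i => (exp (c * Δ i) - 1) / (c * Δ i)) l (𝓝 1) := by
  refine tendsto_exp_sub_one_div.comp (tendsto_nhdsWithin_iff.2 ⟨?_, ?_⟩)
  · simpa using (hΔ.mono_right nhdsWithin_le_nhds).const_mul c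
  · exact (hΔ.eventually self_mem_nhdsWithin).mono fun i hi => mul_ne_zero hc hi

theorem tendsto_stepErrorClosedForm {ι : Type*} {l : Filter ι} {lam : ℝ} (hlam : lam < 0)
    {Δ : ι → ℝ} {M : ι → ℕ} (hΔ : Tendsto Δ l (𝓝[≠] 0))
    (hΔM : Tendsto (fun i => Δ i * M i) l atTop) :
    Tendsto (fun i => stepErrorClosedForm lam (Δ i) (M i)) l (𝓝 0) := by
  have hlam0 := hlam.ne
  have h2lam : 2 * lam ≠ 0 := by linarith
  have hslope := tendsto_exp_mul_sub_one_div hlam0 hΔ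
  have hslope2 := tendsto_exp_mul_sub_one_div h2lam hΔ
  have hT : Tendsto (fun i => 2 * lam * ((M i + 1) * Δ i)) l atBot := by
    refine Tendsto.const_mul_atTop_of_neg (by linarith) ?_
    convert hΔM.atTop_add (hΔ.mono_right nhdsWithin_le_nhds) using 2
    ring
  have key := tendsto_const_nhds (x := 1 / (-(2 * lam))) |>.add
    ((((tendsto_exp_atBot.comp hT).sub_const 1).mul
      ((hslope2.inv₀ one_ne_zero).div_const (2 * lam))).mul ((hslope.const_mul 2).const_sub 1))
  convert key using 2
  · simp only [stepErrorClosedForm, Function.comp, inv_div]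
    field_simp
  · field_simp
    ring

/-- One-dimensional discretization-plus-truncation error of the exponential
kernel: explicit formula and convergence to `0` as `Δ → 0` and `ΔM → ∞`. -/
theorem kernel_step_approx_error (lam : ℝ) (hlam : lam < 0) :
    (∀ (Δ : ℝ), 0 < Δ → ∀ M : ℕ,
      (∫ s in Set.Ioi (0 : ℝ),
          (Real.exp (lam * s)
            - ∑ j ∈ Finset.range (M + 1),
                Set.indicator (Set.Icc ((j : ℝ) * Δ) (((j : ℝ) + 1) * Δ))
                  (fun _ => Real.exp (lam * j * Δ)) s) ^ 2)
        = 1 / (-(2 * lam))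
          + (Real.exp (2 * lam * ((M : ℝ) + 1) * Δ) - 1) * Δ
              / (Real.exp (2 * lam * Δ) - 1)
            * (1 - 2 * (Real.exp (lam * Δ) - 1) / (lam * Δ))) ∧
    (∀ (Δs : ℕ → ℝ) (Ms : ℕ → ℕ), (∀ n, 0 < Δs n) →
      Tendsto Δs atTop (nhds 0) →
      Tendsto (fun n => Δs n * (Ms n : ℝ)) atTop atTop →
      Tendsto (fun n =>
          ∫ s in Set.Ioi (0 : ℝ),
            (Real.exp (lam * s)
              - ∑ j ∈ Finset.range (Ms n + 1),
                  Set.indicator (Set.Icc ((j : ℝ) * Δs n) (((j : ℝ) + 1) * Δs n))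
                    (fun _ => Real.exp (lam * j * Δs n)) s) ^ 2)
        atTop (nhds 0)) := by
  refine ⟨fun Δ hΔ M => integral_Ioi_stepError hlam hΔ,
    fun Δs Ms hpos hΔs hΔsMs => ?_⟩
  have hΔs' : Tendsto Δs atTop (𝓝[≠] 0) :=
    tendsto_nhdsWithin_iff.2 ⟨hΔs, .of_forall fun n => (hpos n).ne'⟩
  refine (tendsto_stepErrorClosedForm hlam hΔs' hΔsMs).congr fun n => ?_
  exact (integral_Ioi_stepError hlam (hpos n)).symm
end

section
/- Let f₁(u,v) := ∏_{i=1}^d 1/(-2λ_i) + ∏_{i=1}^d ((e^{2λ_i(u+v)} - 1)v/(e^{2λ_i v} - 1)) · (1 - 2∏_{i=1}^d (e^{λ_i v} - 1)/(λ_i v)) for real λ_1, ..., λ_d < 0 and u, v > 0. Then f₁(u,v) → 0 as simultaneously u → ∞ and v → 0. -/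
/-!
Every factor has a limit of its own. Since `λ < 0` and `(e^{cv} - 1) / v → c` as `v → 0`,
the factor `(e^{2λ(u+v)} - 1) · v / (e^{2λv} - 1)` of the middle product tends to
`-1 · (1 / 2λ) = 1 / (-2λ)`, and each factor `(e^{λv} - 1) / (λv)` of the last product tends to `1`.
The limit of `f₁` is therefore `P + P · (1 - 2) = 0` with `P = ∏ 1 / (-2λᵢ)`.
-/

open Filter Finset Topology Real

theorem tendsto_exp_mul_sub_one_div_s7 (c : ℝ) :
    Tendsto (fun v => (exp (c * v) - 1) / v) (𝓝[≠] 0) (𝓝 c) := by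
  have h : HasDerivAt (fun v => exp (c * v)) c 0 := by
    simpa using ((hasDerivAt_id (0 : ℝ)).const_mul c).exp
  refine h.tendsto_slope_zero.congr fun v => ?_
  simp [div_eq_inv_mul]

theorem tendsto_exp_mul_sub_one_div_mul {c : ℝ} (hc : c ≠ 0) :
    Tendsto (fun v => (exp (c * v) - 1) / (c * v)) (𝓝[≠] 0) (𝓝 1) := by
  have h := (tendsto_exp_mul_sub_one_div_s7 c).div_const c
  rw [div_self hc] at h
  refine h.congr fun v => ?_
  rw [div_div, mul_comm]

theorem tendsto_snd_prod_nhdsGT {α : Type*} (l : Filter α) (a : ℝ) :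
    Tendsto Prod.snd (l ×ˢ 𝓝[>] a) (𝓝[≠] a) :=
  tendsto_snd.mono_right (nhdsWithin_mono _ fun _ hx => ne_of_gt hx)

theorem tendsto_exp_mul_add_sub_one_mul_div_exp_mul_sub_one {c : ℝ} (hc : c < 0) :
    Tendsto (fun uv : ℝ × ℝ => (exp (c * (uv.1 + uv.2)) - 1) * uv.2 / (exp (c * uv.2) - 1))
      (atTop ×ˢ 𝓝[>] 0) (𝓝 (1 / -c)) := by
  have hv := tendsto_snd_prod_nhdsGT (atTop : Filter ℝ) 0
  have hsum : Tendsto (fun uv : ℝ × ℝ => uv.1 + uv.2) (atTop ×ˢ 𝓝[>] 0) atTop :=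
    tendsto_fst.atTop_add (hv.mono_right nhdsWithin_le_nhds)
  have hnum : Tendsto (fun uv : ℝ × ℝ => exp (c * (uv.1 + uv.2)) - 1) (atTop ×ˢ 𝓝[>] 0)
      (𝓝 (0 - 1)) :=
    (tendsto_exp_atBot.comp (hsum.const_mul_atTop_of_neg hc)).sub_const 1
  have hden : Tendsto (fun uv : ℝ × ℝ => uv.2 / (exp (c * uv.2) - 1)) (atTop ×ˢ 𝓝[>] 0)
      (𝓝 c⁻¹) :=
    (((tendsto_exp_mul_sub_one_div_s7 c).inv₀ hc.ne).comp hv).congr fun uv => by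
      simp [inv_div]
  convert hnum.mul hden using 2
  · exact mul_div_assoc _ _ _
  · ring

theorem f1_tendsto_zero_general (d : ℕ)
    (lam : Fin d → ℝ) (hlam : ∀ i, lam i < 0) :
    Tendsto
      (fun uv : ℝ × ℝ =>
        (∏ i : Fin d, 1 / (-(2 * lam i)))
          + (∏ i : Fin d,
              (Real.exp (2 * lam i * (uv.1 + uv.2)) - 1) * uv.2
                / (Real.exp (2 * lam i * uv.2) - 1))
            * (1 - 2 * ∏ i : Fin d, (Real.exp (lam i * uv.2) - 1) / (lam i * uv.2)))
      (atTop ×ˢ nhdsWithin (0 : ℝ) (Set.Ioi 0)) (nhds 0) := by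
  have hP := tendsto_finsetProd univ fun i _ =>
    tendsto_exp_mul_add_sub_one_mul_div_exp_mul_sub_one (by linarith [hlam i] : 2 * lam i < 0)
  have hQ := tendsto_finsetProd univ fun i _ =>
    (tendsto_exp_mul_sub_one_div_mul (hlam i).ne).comp
      (tendsto_snd_prod_nhdsGT (atTop : Filter ℝ) 0)
  rw [prod_const_one] at hQ
  have hlim := (tendsto_const_nhds (x := ∏ i, 1 / -(2 * lam i))).add
    (hP.mul ((tendsto_const_nhds (x := (1 : ℝ))).sub (hQ.const_mul 2)))
  rwa [show ∀ P : ℝ, P + P * (1 - 2 * 1) = 0 by intro P; ring] at hlim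

/-- The joint limit `f₁(u,v) → 0` as `u → ∞` and `v → 0⁺` for the error
function of Theorem 5.5. -/
theorem f1_tendsto_zero (d : ℕ) (hd : 0 < d)
    (lam : Fin d → ℝ) (hlam : ∀ i, lam i < 0) :
    Tendsto
      (fun uv : ℝ × ℝ =>
        (∏ i : Fin d, 1 / (-(2 * lam i)))
          + (∏ i : Fin d,
              (Real.exp (2 * lam i * (uv.1 + uv.2)) - 1) * uv.2
                / (Real.exp (2 * lam i * uv.2) - 1))
            * (1 - 2 * ∏ i : Fin d, (Real.exp (lam i * uv.2) - 1) / (lam i * uv.2)))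
      (atTop ×ˢ nhdsWithin (0 : ℝ) (Set.Ioi 0)) (nhds 0) :=
  f1_tendsto_zero_general d lam hlam
end

section
/- Let λ_{11}, λ_{12}, λ_{21}, λ_{22} be nonzero reals with λ_{11} ≠ ±λ_{12}, λ_{21} ≠ ±λ_{22}, and λ_{11}λ_{12} ≠ λ_{21}λ_{22}. Then the 4×3 matrix with rows (2λ_{11}λ_{12}+λ_{12}²+λ_{21}λ_{22}, 2λ_{11}²λ_{12}+2λ_{11}λ_{12}², λ_{11}²λ_{12}²−λ_{11}²λ_{21}λ_{22}), (2λ_{11}λ_{12}+λ_{11}²+λ_{21}λ_{22}, 2λ_{11}²λ_{12}+2λ_{11}λ_{12}², λ_{11}²λ_{12}²−λ_{12}²λ_{21}λ_{22}), (λ_{11}²+3λ_{11}λ_{12}+λ_{12}²−λ_{21}², 2λ_{11}²λ_{12}+2λ_{11}λ_{12}², λ_{11}²λ_{12}²−λ_{11}λ_{12}λ_{21}²), (λ_{11}²+3λ_{11}λ_{12}+λ_{12}²−λ_{22}², 2λ_{11}²λ_{12}+2λ_{11}λ_{12}², λ_{11}²λ_{12}²−λ_{11}λ_{12}λ_{22}²)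 has trivial kernel, i.e. the only x ∈ ℝ³ with Mx = 0 is x = 0. -/
open Matrix

/-- The 4×3 system matrix from the CARMA(2,1) identifiability proof has trivial
kernel when `λ₁₁λ₁₂ ≠ λ₂₁λ₂₂` (plus the nondegeneracy conditions). -/
theorem carma21_system_trivial_kernel
    (l11 l12 l21 l22 : ℝ)
    (h11 : l11 ≠ 0) (h12 : l12 ≠ 0) (h21 : l21 ≠ 0) (h22 : l22 ≠ 0)
    (hne1 : l11 ≠ l12) (hne1' : l11 ≠ -l12)
    (hne2 : l21 ≠ l22) (hne2' : l21 ≠ -l22)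
    (hprod : l11 * l12 ≠ l21 * l22)
    (M : Matrix (Fin 4) (Fin 3) ℝ)
    (hM : M = !![2*l11*l12 + l12^2 + l21*l22, 2*l11^2*l12 + 2*l11*l12^2, l11^2*l12^2 - l11^2*l21*l22;
                 2*l11*l12 + l11^2 + l21*l22, 2*l11^2*l12 + 2*l11*l12^2, l11^2*l12^2 - l12^2*l21*l22;
                 l11^2 + 3*l11*l12 + l12^2 - l21^2, 2*l11^2*l12 + 2*l11*l12^2, l11^2*l12^2 - l11*l12*l21^2;
                 l11^2 + 3*l11*l12 + l12^2 - l22^2, 2*l11^2*l12 + 2*l11*l12^2, l11^2*l12^2 - l11*l12*l22^2]) :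
    ∀ x : Fin 3 → ℝ, M.mulVec x = 0 → x = 0 := by
  intro x hx
  subst hM
  have e0 := congrFun hx 0
  have e1 := congrFun hx 1
  have e2 := congrFun hx 2
  have e3 := congrFun hx 3
  simp [Matrix.mulVec, dotProduct, Fin.sum_univ_succ] at e0 e1 e2 e3
  have hd1 : l11 - l12 ≠ 0 := sub_ne_zero.mpr hne1
  have hs1 : l11 + l12 ≠ 0 := by
    intro h; exact hne1' (by linarith)
  have hd2 : l21 - l22 ≠ 0 := sub_ne_zero.mpr hne2
  have hs2 : l21 + l22 ≠ 0 := by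
    intro h; exact hne2' (by linarith)
  have hA : (l11 - l12) * (l11 + l12) * (x 0 + l21 * l22 * x 2) = 0 := by
    linear_combination e1 - e0
  have hA' : x 0 + l21 * l22 * x 2 = 0 := by
    rcases mul_eq_zero.mp hA with h | h
    · exact absurd h (mul_ne_zero hd1 hs1)
    · exact h
  have hB : (l21 - l22) * (l21 + l22) * (x 0 + l11 * l12 * x 2) = 0 := by
    linear_combination e3 - e2
  have hB' : x 0 + l11 * l12 * x 2 = 0 := by
    rcases mul_eq_zero.mp hB with h | h
    · exact absurd h (mul_ne_zero hd2 hs2)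
    · exact h
  have hx2 : x 2 = 0 := by
    have h : (l11 * l12 - l21 * l22) * x 2 = 0 := by linear_combination hB' - hA'
    rcases mul_eq_zero.mp h with h' | h'
    · exact absurd (sub_eq_zero.mp h') hprod
    · exact h'
  have hx0 : x 0 = 0 := by
    have := hA'; rw [hx2] at this; linarith
  have hx1 : x 1 = 0 := by
    have h : 2 * l11 * l12 * (l11 + l12) * x 1 = 0 := by
      linear_combination e0 - (2*l11*l12 + l12^2 + l21*l22) * hx0
        - (l11^2*l12^2 - l11^2*l21*l22) * hx2
    have hnz : 2 * l11 * l12 * (l11 + l12) ≠ 0 :=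
      mul_ne_zero (mul_ne_zero (mul_ne_zero two_ne_zero h11) h12) hs1
    exact (mul_eq_zero.mp h).resolve_left hnz
  funext i
  fin_cases i <;> simpa [hx0, hx1, hx2]
end

section
/- Define λ_{11} = λ_{21} = −2 and λ_{12} = λ_{22} = −6. Then the two parameter pairs (b₀, b₁) = (2, 4) and (b₀, b₁) = (20/√7, 9/√7) give the same values of the four quadratic forms (b₀+b₁λ_{11})(b₀(2λ_{11}λ_{12}+λ_{12}²+λ_{21}λ_{22})+b₁λ_{11}(λ_{12}²−λ_{21}λ_{22})), (b₀+b₁λ_{12})(b₀(λ_{11}²+2λ_{11}λ_{12}+λ_{21}λ_{22})+b₁λ_{12}(λ_{11}²−λ_{21}λ_{22})), b₀²(λ_{11}²+3λ_{11}λ_{12}+λ_{12}²−λ_{21}²)+2b₀b₁λ_{11}λ_{12}(λ_{11}+λ_{12})+b₁²λ_{11}λ_{12}(λ_{11}λ_{12}−λ_{21}²), and b₀²(λ_{11}²+3λ_{11}λ_{12}+λ_{12}²−λ_{22}²)+2b₀b₁λ_{11}λ_{12}(λ_{11}+λ_{12})+b₁²λ_{11}λ_{12}(λ_{11}λ_{12}−λ_{22}²).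 -/
/-- With `λ₁₁ = λ₂₁ = -2`, `λ₁₂ = λ₂₂ = -6`, the parameter pairs `(2,4)` and
`(20/√7, 9/√7)` yield the same values of the four quadratic forms, so
identifiability fails when `λ₁₁λ₁₂ = λ₂₁λ₂₂`. -/
theorem carma21_nonidentifiable_example
    (l11 l12 l21 l22 : ℝ)
    (h1 : l11 = -2) (h2 : l12 = -6) (h3 : l21 = -2) (h4 : l22 = -6)
    (b0 b1 c0 c1 : ℝ)
    (hb0 : b0 = 2) (hb1 : b1 = 4)
    (hc0 : c0 = 20 / Real.sqrt 7) (hc1 : c1 = 9 / Real.sqrt 7) :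
    (b0 + b1*l11) * (b0*(2*l11*l12 + l12^2 + l21*l22) + b1*l11*(l12^2 - l21*l22))
      = (c0 + c1*l11) * (c0*(2*l11*l12 + l12^2 + l21*l22) + c1*l11*(l12^2 - l21*l22))
    ∧ (b0 + b1*l12) * (b0*(l11^2 + 2*l11*l12 + l21*l22) + b1*l12*(l11^2 - l21*l22))
      = (c0 + c1*l12) * (c0*(l11^2 + 2*l11*l12 + l21*l22) + c1*l12*(l11^2 - l21*l22))
    ∧ b0^2*(l11^2 + 3*l11*l12 + l12^2 - l21^2) + 2*b0*b1*l11*l12*(l11+l12)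
        + b1^2*l11*l12*(l11*l12 - l21^2)
      = c0^2*(l11^2 + 3*l11*l12 + l12^2 - l21^2) + 2*c0*c1*l11*l12*(l11+l12)
        + c1^2*l11*l12*(l11*l12 - l21^2)
    ∧ b0^2*(l11^2 + 3*l11*l12 + l12^2 - l22^2) + 2*b0*b1*l11*l12*(l11+l12)
        + b1^2*l11*l12*(l11*l12 - l22^2)
      = c0^2*(l11^2 + 3*l11*l12 + l12^2 - l22^2) + 2*c0*c1*l11*l12*(l11+l12)
        + c1^2*l11*l12*(l11*l12 - l22^2) := by
  have hs : Real.sqrt 7 ^ 2 = 7 := Real.sq_sqrt (by norm_num)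
  have hs0 : Real.sqrt 7 ≠ 0 := by positivity
  subst h1 h2 h3 h4 hb0 hb1 hc0 hc1
  refine ⟨?_, ?_, ?_, ?_⟩ <;> field_simp <;> nlinarith [hs]
end

section
/- Let p ≥ 1, A ∈ ℝ^{p×p} be the companion matrix of the monic polynomial a(z) = ∑_{j=0}^p a_j z^{p−j} (a₀ = 1), and define Q(z) := a(z)(zI_p − A)^{-1}. Then Q is a matrix polynomial (every entry is a polynomial in z), with (k,l)-entry Q_{k,l}(z) = z^{p−1+k−l} + ∑_{j=1}^{p−l} a_j z^{p−1−j+k−l} for k ≤ l, and Q_{k,l}(z) = −∑_{j=p−l+1}^{p} a_j z^{p−1−j+k−l} for k > l. -/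
open Matrix Finset

/-- The claimed entries of `Q(z) = a(z)(zI-A)⁻¹`, as a function of natural indices. -/
noncomputable def qe (p : ℕ) (a : ℕ → ℝ) (z : ℝ) (k l : ℕ) : ℝ :=
  if k ≤ l then
    z ^ (k + (p - 1 - l))
      + ∑ j ∈ Finset.Icc 1 (p - 1 - l), a j * z ^ (k + (p - 1 - l - j))
  else
    -∑ j ∈ Finset.Icc (p - l) p, a j * z ^ ((k - l - 1) + (p - j))

private lemma icc_one_eq_ioc (n : ℕ) : Finset.Icc 1 n = Finset.Ioc 0 n := by
  ext x; simp [Finset.mem_Icc, Finset.mem_Ioc]; omega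

private lemma icc_succ_eq_ioc (m n : ℕ) : Finset.Icc (m + 1) n = Finset.Ioc m n := by
  ext x; simp [Finset.mem_Icc, Finset.mem_Ioc]

private lemma icc_split_top (f : ℕ → ℝ) (n : ℕ) (hn : 1 ≤ n) :
    ∑ j ∈ Finset.Icc 1 n, f j = ∑ j ∈ Finset.Icc 1 (n - 1), f j + f n := by
  obtain ⟨m, rfl⟩ : ∃ m, n = m + 1 := ⟨n - 1, by omega⟩
  simp [Finset.sum_Icc_succ_top]

private lemma icc_split_head (f : ℕ → ℝ) (m n : ℕ) (h : m ≤ n) :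
    ∑ j ∈ Finset.Icc m n, f j = f m + ∑ j ∈ Finset.Icc (m + 1) n, f j := by
  rw [Finset.Icc_eq_cons_Ioc h, Finset.sum_cons, icc_succ_eq_ioc]

private lemma icc_split_mid (f : ℕ → ℝ) (m n : ℕ) (h : m ≤ n) :
    ∑ j ∈ Finset.Icc 1 n, f j
      = ∑ j ∈ Finset.Icc 1 m, f j + ∑ j ∈ Finset.Icc (m + 1) n, f j := by
  rw [icc_one_eq_ioc n, icc_one_eq_ioc m, icc_succ_eq_ioc,
      Finset.sum_Ioc_consecutive f (Nat.zero_le m) h]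

private lemma aux_sum (p l : ℕ) (hl : l < p) (C : ℝ) :
    (∑ m ∈ Finset.range p, if l = m + 1 then C else 0) = if 1 ≤ l then C else 0 := by
  rcases Nat.eq_zero_or_pos l with rfl | hl1
  · simp
  · rw [if_pos (show 1 ≤ l from hl1), Finset.sum_eq_single (l - 1)]
    · rw [if_pos (by omega)]
    · intro b _ hb; rw [if_neg (by omega)]
    · intro h; exact absurd (Finset.mem_range.mpr (by omega)) h

private lemma hc_expand (p : ℕ) (a : ℕ → ℝ) (ha0 : a 0 = 1) (z : ℝ) :
    (∑ j ∈ Finset.range (p + 1), a j * z ^ (p - j))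
      = z ^ p + ∑ j ∈ Finset.Icc 1 p, a j * z ^ (p - j) := by
  rw [Finset.range_eq_Ico, Finset.Ico_add_one_right_eq_Icc,
      Finset.Icc_eq_cons_Ioc (Nat.zero_le p), Finset.sum_cons, ← icc_one_eq_ioc p]
  simp [ha0]

private lemma pow_shift (z : ℝ) (m n : ℕ) (h : n = m + 1) : z * z ^ m = z ^ n := by
  subst h; ring

private lemma mul_sum_shift (a : ℕ → ℝ) (z : ℝ) (s : Finset ℕ) (e e' : ℕ → ℕ)
    (h : ∀ j ∈ s, e' j = e j + 1) :
    z * ∑ j ∈ s, a j * z ^ (e j) = ∑ j ∈ s, a j * z ^ (e' j) := by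
  rw [Finset.mul_sum]
  refine Finset.sum_congr rfl fun j hj => ?_
  rw [h j hj]; ring

private lemma sum_exp_congr (a : ℕ → ℝ) (z : ℝ) (s : Finset ℕ) (e e' : ℕ → ℕ)
    (h : ∀ j ∈ s, e j = e' j) :
    ∑ j ∈ s, a j * z ^ (e j) = ∑ j ∈ s, a j * z ^ (e' j) :=
  Finset.sum_congr rfl fun j hj => by rw [h j hj]

private lemma key (p : ℕ) (hp : 1 ≤ p) (a : ℕ → ℝ) (ha0 : a 0 = 1) (z : ℝ)
    (k l : ℕ) (hk : k < p) (hl : l < p) :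
    ∑ m ∈ Finset.range p, qe p a z k m *
        ((if m = l then z else 0)
          - (if l = m + 1 then 1 else if m = p - 1 then -a (p - l) else 0))
      = if k = l then ∑ j ∈ Finset.range (p + 1), a j * z ^ (p - j) else 0 := by
  have hqlast : qe p a z k (p - 1) = z ^ k := by
    rw [qe, if_pos (by omega : k ≤ p - 1), show p - 1 - (p - 1) = 0 from by omega]
    simp
  have hsplit : ∀ m ∈ Finset.range p, qe p a z k m *
        ((if m = l then z else 0)
          - (if l = m + 1 then 1 else if m = p - 1 then -a (p - l) else 0))
      = (if m = l then z * qe p a z k m else 0)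
        - (if l = m + 1 then qe p a z k (l - 1) else 0)
        + (if m = p - 1 then a (p - l) * qe p a z k m else 0) := by
    intro m hm
    rw [Finset.mem_range] at hm
    by_cases h2 : l = m + 1
    · have h1 : ¬ m = l := by omega
      have h3 : ¬ m = p - 1 := by omega
      simp only [if_pos h2, if_neg h1, if_neg h3, show l - 1 = m from by omega]
      ring
    · by_cases h1 : m = l
      · subst h1
        by_cases h3 : m = p - 1
        · simp only [if_pos rfl, if_neg h2, if_pos h3, if_true]
          ring
        · simp only [if_pos rfl, if_neg h2, if_neg h3, if_true]
          ring
      · by_cases h3 : m = p - 1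
        · simp only [if_neg h1, if_neg h2, if_pos h3]
          ring
        · simp only [if_neg h1, if_neg h2, if_neg h3]
          ring
  rw [Finset.sum_congr rfl hsplit]
  rw [Finset.sum_add_distrib, Finset.sum_sub_distrib,
      Finset.sum_ite_eq' (Finset.range p) l (fun m => z * qe p a z k m),
      Finset.sum_ite_eq' (Finset.range p) (p - 1) (fun m => a (p - l) * qe p a z k m),
      aux_sum p l hl,
      if_pos (Finset.mem_range.mpr hl), if_pos (Finset.mem_range.mpr (by omega : p - 1 < p)),
      hqlast]
  by_cases hl0 : 1 ≤ l
  · rw [if_pos hl0]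
    rcases lt_trichotomy k l with hkl | rfl | hkl
    · -- k < l : everything cancels
      rw [if_neg (by omega : ¬ k = l)]
      have eC1 : z * qe p a z k l
          = z ^ (k + (p - l)) + ∑ j ∈ Finset.Icc 1 (p - 1 - l), a j * z ^ (k + (p - l - j)) := by
        simp only [qe]
        rw [if_pos (by omega : k ≤ l), mul_add,
            pow_shift z (k + (p - 1 - l)) (k + (p - l)) (by omega),
            mul_sum_shift a z _ (fun j => k + (p - 1 - l - j)) (fun j => k + (p - l - j))
              (fun j hj => by
                rw [Finset.mem_Icc] at hj
                show k + (p - l - j) = k + (p - 1 - l - j) + 1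
                omega)]
      have eC2 : qe p a z k (l - 1)
          = z ^ (k + (p - l))
            + (∑ j ∈ Finset.Icc 1 (p - 1 - l), a j * z ^ (k + (p - l - j)) + a (p - l) * z ^ k) := by
        simp only [qe]
        rw [if_pos (by omega : k ≤ l - 1), show p - 1 - (l - 1) = p - l from by omega,
            icc_split_top (fun j => a j * z ^ (k + (p - l - j))) (p - l) (by omega),
            show p - l - 1 = p - 1 - l from by omega,
            show k + (p - l - (p - l)) = k from by omega]
      rw [eC1, eC2]; ring
    · -- k = l : the diagonal gives a(z)
      rw [if_pos rfl]
      have eD1 : z * qe p a z k k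
          = z ^ p + ∑ j ∈ Finset.Icc 1 (p - 1 - k), a j * z ^ (p - j) := by
        simp only [qe]
        rw [if_pos (le_refl k), mul_add, pow_shift z (k + (p - 1 - k)) p (by omega),
            mul_sum_shift a z _ (fun j => k + (p - 1 - k - j)) (fun j => p - j)
              (fun j hj => by
                rw [Finset.mem_Icc] at hj
                show p - j = k + (p - 1 - k - j) + 1
                omega)]
      have eD2 : qe p a z k (k - 1)
          = -∑ j ∈ Finset.Icc ((p - k) + 1) p, a j * z ^ (p - j) := by
        simp only [qe]
        rw [if_neg (by omega : ¬ k ≤ k - 1), show p - (k - 1) = (p - k) + 1 from by omega,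
            sum_exp_congr a z _ (fun j => (k - (k - 1) - 1) + (p - j)) (fun j => p - j)
              (fun j _ => by
                show (k - (k - 1) - 1) + (p - j) = p - j
                omega)]
      have eD3 : (∑ j ∈ Finset.range (p + 1), a j * z ^ (p - j))
          = z ^ p + (∑ j ∈ Finset.Icc 1 (p - 1 - k), a j * z ^ (p - j)
              + a (p - k) * z ^ (p - (p - k))
              + ∑ j ∈ Finset.Icc ((p - k) + 1) p, a j * z ^ (p - j)) := by
        rw [hc_expand p a ha0 z,
            icc_split_mid (fun j => a j * z ^ (p - j)) (p - k) p (by omega),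
            icc_split_top (fun j => a j * z ^ (p - j)) (p - k) (by omega),
            show p - k - 1 = p - 1 - k from by omega]
      rw [eD1, eD2, eD3, show p - (p - k) = k from by omega]
      ring
    · -- k > l : everything cancels
      rw [if_neg (by omega : ¬ k = l)]
      have eE1 : z * qe p a z k l
          = -(a (p - l) * z ^ k)
            - ∑ j ∈ Finset.Icc ((p - l) + 1) p, a j * z ^ ((k - l) + (p - j)) := by
        simp only [qe]
        rw [if_neg (by omega : ¬ k ≤ l), mul_neg,
            mul_sum_shift a z _ (fun j => (k - l - 1) + (p - j)) (fun j => (k - l) + (p - j))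
              (fun j _ => by
                show (k - l) + (p - j) = (k - l - 1) + (p - j) + 1
                omega),
            icc_split_head (fun j => a j * z ^ ((k - l) + (p - j))) (p - l) p (by omega),
            show (k - l) + (p - (p - l)) = k from by omega]
        ring
      have eE2 : qe p a z k (l - 1)
          = -∑ j ∈ Finset.Icc ((p - l) + 1) p, a j * z ^ ((k - l) + (p - j)) := by
        simp only [qe]
        rw [if_neg (by omega : ¬ k ≤ l - 1), show p - (l - 1) = (p - l) + 1 from by omega,
            sum_exp_congr a z _ (fun j => (k - (l - 1) - 1) + (p - j))
              (fun j => (k - l) + (p - j)) (fun j _ => by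
                show (k - (l - 1) - 1) + (p - j) = (k - l) + (p - j)
                omega)]
      rw [eE1, eE2]; ring
  · -- l = 0
    have hl0' : l = 0 := by omega
    subst hl0'
    rw [if_neg hl0]
    by_cases hk0 : k = 0
    · subst hk0
      rw [if_pos rfl]
      have eA1 : z * qe p a z 0 0
          = z ^ p + ∑ j ∈ Finset.Icc 1 (p - 1), a j * z ^ (p - j) := by
        simp only [qe]
        rw [if_pos (le_refl 0), show p - 1 - 0 = p - 1 from by omega, mul_add,
            pow_shift z (0 + (p - 1)) p (by omega),
            mul_sum_shift a z _ (fun j => 0 + (p - 1 - j)) (fun j => p - j)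
              (fun j hj => by
                rw [Finset.mem_Icc] at hj
                show p - j = 0 + (p - 1 - j) + 1
                omega)]
      rw [eA1, hc_expand p a ha0 z, icc_split_top (fun j => a j * z ^ (p - j)) p hp,
          Nat.sub_zero, Nat.sub_self, pow_zero]
      ring
    · rw [if_neg hk0]
      have eB1 : qe p a z k 0 = -(a p * z ^ (k - 1)) := by
        simp only [qe]
        rw [if_neg (by omega : ¬ k ≤ 0), Nat.sub_zero, Finset.Icc_self,
            Finset.sum_singleton, show k - 0 - 1 + (p - p) = k - 1 from by omega]
      rw [eB1, Nat.sub_zero, ← pow_shift z (k - 1) k (by omega)]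
      ring

/-- Explicit entries of `Q(z) = a(z)(zI - A)⁻¹` for the companion matrix `A`
of the monic polynomial `a(z) = ∑_{j=0}^p a_j z^{p-j}` (with `a₀ = 1`).
Indices are 0-based: `k, l : Fin p` correspond to `k+1, l+1` in the paper. -/
theorem companion_resolvent_entries
    (p : ℕ) (hp : 1 ≤ p) (a : ℕ → ℝ) (ha0 : a 0 = 1)
    (A : Matrix (Fin p) (Fin p) ℝ)
    (hA : ∀ k l : Fin p, A k l =
      if (l : ℕ) = (k : ℕ) + 1 then 1
      else if (k : ℕ) = p - 1 ∧ ¬((l : ℕ) = (k : ℕ) + 1) then -(a (p - (l : ℕ)))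
      else 0)
    (z : ℝ) (hz : (∑ j ∈ Finset.range (p + 1), a j * z ^ (p - j)) ≠ 0) :
    ∀ k l : Fin p,
      ((∑ j ∈ Finset.range (p + 1), a j * z ^ (p - j)) •
          (z • (1 : Matrix (Fin p) (Fin p) ℝ) - A)⁻¹) k l =
        if (k : ℕ) ≤ (l : ℕ) then
          z ^ ((k : ℕ) + (p - 1 - (l : ℕ)))
            + ∑ j ∈ Finset.Icc 1 (p - 1 - (l : ℕ)),
                a j * z ^ ((k : ℕ) + (p - 1 - (l : ℕ) - j))
        else
          -∑ j ∈ Finset.Icc (p - (l : ℕ)) p,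
              a j * z ^ (((k : ℕ) - (l : ℕ) - 1) + (p - j)) := by
  intro k l
  set c : ℝ := ∑ j ∈ Finset.range (p + 1), a j * z ^ (p - j) with hcdef
  set M : Matrix (Fin p) (Fin p) ℝ := z • 1 - A with hMdef
  set Q : Matrix (Fin p) (Fin p) ℝ := Matrix.of fun i j : Fin p => qe p a z i j with hQdef
  have hQM : Q * M = c • 1 := by
    ext i j
    rw [Matrix.mul_apply]
    have h1 : ∀ m : Fin p, Q i m * M m j
        = qe p a z (i : ℕ) (m : ℕ) *
            ((if (m : ℕ) = (j : ℕ) then z else 0)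
              - (if (j : ℕ) = (m : ℕ) + 1 then 1
                 else if (m : ℕ) = p - 1 then -a (p - (j : ℕ)) else 0)) := by
      intro m
      rw [hQdef, hMdef]
      simp only [Matrix.of_apply, Matrix.sub_apply, Matrix.smul_apply, Matrix.one_apply,
        hA m j, smul_eq_mul]
      congr 1
      congr 1
      · by_cases h : m = j
        · rw [if_pos h, if_pos (by rw [h]), mul_one]
        · rw [if_neg h, if_neg (by simpa [Fin.val_eq_val] using h), mul_zero]
      · by_cases h : (j : ℕ) = (m : ℕ) + 1
        · rw [if_pos h, if_pos h]
        · rw [if_neg h, if_neg h]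
          by_cases h3 : (m : ℕ) = p - 1
          · rw [if_pos ⟨h3, h⟩, if_pos h3]
          · rw [if_neg (by tauto), if_neg h3]
    rw [Finset.sum_congr rfl (fun m _ => h1 m)]
    rw [Fin.sum_univ_eq_sum_range (fun m => qe p a z (i : ℕ) m *
        ((if m = (j : ℕ) then z else 0)
          - (if (j : ℕ) = m + 1 then 1 else if m = p - 1 then -a (p - (j : ℕ)) else 0))) p]
    rw [key p hp a ha0 z (i : ℕ) (j : ℕ) i.isLt j.isLt]
    simp only [Matrix.smul_apply, Matrix.one_apply, smul_eq_mul, Fin.val_eq_val]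
    by_cases h : i = j <;> simp [h, hcdef]
  have hMinv : M⁻¹ = c⁻¹ • Q := by
    apply Matrix.inv_eq_left_inv
    rw [Matrix.smul_mul, hQM, smul_smul, inv_mul_cancel₀ hz, one_smul]
  rw [hMinv, smul_smul, mul_inv_cancel₀ hz, one_smul]
  rfl
end

section
/- Let λ₁ = λ₂₁ = −2, λ₂ = λ₂₂ = −6 (so λ₁λ₂ = 12). For the variogram coefficients of a CARMA(2,1) field restricted to an axis with b = (b₀, b₁), define F(b₀,b₁) := (b₀² (λ₁² + 3λ₁λ₂ + λ₂² − λ₂₁²) + 2b₀b₁λ₁λ₂(λ₁+λ₂) + b₁²λ₁λ₂(λ₁λ₂ − λ₂₁²), b₀²(λ₁² + 3λ₁λ₂ + λ₂² − λ₂₂²) + 2b₀b₁λ₁λ₂(λ₁+λ₂) + b₁²λ₁λ₂(λ₁λ₂ − λ₂₂²)). Then the map (b₀,b₁) ↦ F(b₀,b₁) restricted to {b₀ ≥ 0, b₁ ≠ 0} is not injective. -/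
/-- With `λ₁ = λ₂₁ = -2`, `λ₂ = λ₂₂ = -6` (so `λ₁λ₂ = λ₂₁λ₂₂`), the map
sending `(b₀, b₁)` to the pair of variogram-coefficient quadratic forms is not
injective on `{b₀ ≥ 0, b₁ ≠ 0}`. -/
theorem carma21_variogram_coeff_not_injective
    (l1 l2 l21 l22 : ℝ)
    (h1 : l1 = -2) (h2 : l2 = -6) (h3 : l21 = -2) (h4 : l22 = -6)
    (F : ℝ × ℝ → ℝ × ℝ)
    (hF : ∀ b : ℝ × ℝ, F b =
      (b.1 ^ 2 * (l1 ^ 2 + 3 * l1 * l2 + l2 ^ 2 - l21 ^ 2)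
          + 2 * b.1 * b.2 * l1 * l2 * (l1 + l2)
          + b.2 ^ 2 * l1 * l2 * (l1 * l2 - l21 ^ 2),
        b.1 ^ 2 * (l1 ^ 2 + 3 * l1 * l2 + l2 ^ 2 - l22 ^ 2)
          + 2 * b.1 * b.2 * l1 * l2 * (l1 + l2)
          + b.2 ^ 2 * l1 * l2 * (l1 * l2 - l22 ^ 2))) :
    ¬ Set.InjOn F {b : ℝ × ℝ | 0 ≤ b.1 ∧ b.2 ≠ 0} := by
  intro h
  have h7 : Real.sqrt 7 ^ 2 = 7 := Real.sq_sqrt (by norm_num)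
  have h7pos : (0:ℝ) < Real.sqrt 7 := Real.sqrt_pos.mpr (by norm_num)
  have hmem1 : ((2 * Real.sqrt 7, Real.sqrt 7) : ℝ × ℝ) ∈
      {b : ℝ × ℝ | 0 ≤ b.1 ∧ b.2 ≠ 0} := ⟨by positivity, ne_of_gt h7pos⟩
  have hmem2 : ((2, 3) : ℝ × ℝ) ∈ {b : ℝ × ℝ | 0 ≤ b.1 ∧ b.2 ≠ 0} :=
    ⟨by norm_num, by norm_num⟩
  have hFeq : F (2 * Real.sqrt 7, Real.sqrt 7) = F (2, 3) := by
    rw [hF, hF]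
    subst h1 h2 h3 h4
    simp only [Prod.mk.injEq]
    constructor <;> nlinarith [h7]
  have := h hmem1 hmem2 hFeq
  have h2' : Real.sqrt 7 = 3 := congrArg Prod.snd this
  rw [h2'] at h7
  norm_num at h7
end
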